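/- arXiv:2006.02922 — 3 statements merged into one kernel-verified Lean document; each statement's English description precedes it below -/
import Mathlib

section
/- The subring of the polynomial ring F_3[y,z] invariant under the F_3-algebra automorphism sending y ↦ y+z and z ↦ z is the polynomial subring F_3[z, c], where c = y^3 − y·z^2 = y(y+z)(y−z). -/
open MvPolynomial

/-- The `F₃`-algebra automorphism of `F₃[y,z]` with `y ↦ y + z`, `z ↦ z`
(here `y = X 0`, `z = X 1`). -/
noncomputable def sigmaYZ : MvPolynomial (Fin 2) (ZMod 3) →ₐ[ZMod 3] MvPolynomial (Fin 2) (ZMod 3) :=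
  aeval ![X 0 + X 1, X 1]

/-!
Write `F₃[y,z] = R[Y]` with `R = F₃[z]`; then `σ` is the Taylor shift `Y ↦ Y + z`. The polynomial
`c = Y³ − z²Y = Y(Y + z)(Y − z)` is monic and shift invariant, so division with remainder by `c`
commutes with the shift and an invariant `f` has invariant quotient and remainder. The remainder
has degree `< 3` and takes the same value at the three distinct points `0, z, 2z`, so it is a
constant; induction on the degree puts `f` in `R[c] = F₃[z, c]`. As `c` is monic of positive
degree over `R`, it is transcendental over `F₃[z]`, which gives the algebraic independence.
-/

namespace Polynomial

variable {R : Type*} [CommRing R]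

theorem taylor_divByMonic_modByMonic (r : R) (f : R[X]) {g : R[X]} (hg : g.Monic) :
    taylor r (f /ₘ g) = taylor r f /ₘ taylor r g ∧
      taylor r (f %ₘ g) = taylor r f %ₘ taylor r g := by
  nontriviality R
  have hdeg : (taylor r (f %ₘ g)).degree < (taylor r g).degree := by
    simpa only [degree_taylor] using degree_modByMonic_lt f hg
  have hsum : taylor r (f %ₘ g) + taylor r g * taylor r (f /ₘ g) = taylor r f := by
    rw [← taylor_mul, ← LinearMap.map_add, modByMonic_add_div f g]
  obtain ⟨hdiv, hmod⟩ :=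
    div_modByMonic_unique _ _ (by simpa [Monic] using hg) ⟨hsum, hdeg⟩
  exact ⟨hdiv.symm, hmod.symm⟩

section ShiftInvariant

variable (p : ℕ) (a : R)

/-- In characteristic `p` this is `∏_{k ∈ 𝔽_p} (X + k a)`, the orbit product of `X` under the
shift `X ↦ X + a`. -/
noncomputable def shiftInvariant : R[X] := X ^ p - C (a ^ (p - 1)) * X

theorem taylor_shiftInvariant [hp : Fact p.Prime] [CharP R p] :
    taylor a (shiftInvariant p a) = shiftInvariant p a := by
  have hpow : C (a ^ (p - 1)) * C a = C a ^ p := by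
    rw [← C_mul, ← C_pow, ← pow_succ, Nat.sub_add_cancel hp.out.one_le]
  simp only [shiftInvariant, map_sub, taylor_X_pow, taylor_mul, taylor_C, taylor_X, add_pow_char]
  linear_combination -hpow

variable {p} in
theorem monic_shiftInvariant (hp : 2 ≤ p) : (shiftInvariant p a).Monic := by
  refine monic_X_pow_sub (degree_C_mul_X_le _ |>.trans_lt ?_)
  exact_mod_cast hp

variable {p} in
theorem natDegree_shiftInvariant [Nontrivial R] (hp : 2 ≤ p) :
    (shiftInvariant p a).natDegree = p := by
  have hlt : (C (a ^ (p - 1)) * X).natDegree < (X ^ p : R[X]).natDegree := by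
    rw [natDegree_X_pow]
    exact (natDegree_C_mul_le _ _).trans natDegree_X_le |>.trans_lt hp
  rw [shiftInvariant, natDegree_sub_eq_left_of_natDegree_lt hlt, natDegree_X_pow]

variable [IsDomain R] [CharP R p] {a}

theorem eq_C_eval_zero_of_taylor_eq_self (ha : a ≠ 0) {f : R[X]} (hf : taylor a f = f)
    (hdeg : f.natDegree < p) : f = C (f.eval 0) := by
  have hshift (k : ℕ) : taylor (k * a) f = f := by
    induction k with
    | zero => simp
    | succ k ih => rw [Nat.cast_succ, add_one_mul, ← taylor_taylor, hf, ih]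
  have hinj : Function.Injective fun k : Fin p => (k : R) * a := by
    intro k l hkl
    have : ((k : ℕ) : R) = (l : ℕ) := mul_right_cancel₀ ha hkl
    rw [CharP.natCast_eq_natCast R p, Nat.ModEq, Nat.mod_eq_of_lt k.2,
      Nat.mod_eq_of_lt l.2] at this
    exact Fin.ext this
  rw [← sub_eq_zero]
  refine eq_zero_of_natDegree_lt_card_of_eval_eq_zero _ hinj (fun k => ?_) ?_
  · simpa [taylor_eval, sub_eq_zero] using congrArg (eval 0) (hshift k)
  · rw [Fintype.card_fin]
    exact (natDegree_sub_le _ _).trans_lt (by simpa using hdeg)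

theorem taylor_eq_self_iff_mem_adjoin_shiftInvariant [hp : Fact p.Prime] (ha : a ≠ 0)
    (f : R[X]) : taylor a f = f ↔ f ∈ Algebra.adjoin R {shiftInvariant p a} := by
  refine ⟨fun hf => ?_, fun hf => ?_⟩
  · induction hn : f.natDegree using Nat.strong_induction_on generalizing f with
    | _ n ih =>
    by_cases hsmall : n < p
    · rw [eq_C_eval_zero_of_taylor_eq_self p ha hf (hn ▸ hsmall)]
      exact Subalgebra.algebraMap_mem _ _
    set c := shiftInvariant p a
    have hc : c.Monic := monic_shiftInvariant a hp.out.two_le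
    have hcdeg : c.natDegree = p := natDegree_shiftInvariant a hp.out.two_le
    obtain ⟨hdiv, hmod⟩ := taylor_divByMonic_modByMonic a f hc
    rw [hf, taylor_shiftInvariant] at hdiv hmod
    have hdeg : (f /ₘ c).natDegree < n := by
      rw [natDegree_divByMonic f hc, hcdeg, hn]
      have := hp.out.pos
      omega
    have hrem : f %ₘ c = C ((f %ₘ c).eval 0) := by
      refine eq_C_eval_zero_of_taylor_eq_self p ha hmod ?_
      have hc1 : c ≠ 1 := fun h1 => hp.out.ne_zero <| by rw [← hcdeg, h1, natDegree_one]
      exact hcdeg ▸ natDegree_modByMonic_lt f hc hc1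
    rw [← modByMonic_add_div f c, hrem]
    exact add_mem (Subalgebra.algebraMap_mem _ _)
      (mul_mem (Algebra.subset_adjoin rfl) (ih _ hdeg _ hdiv rfl))
  · have hle : Algebra.adjoin R {shiftInvariant p a} ≤
        AlgHom.equalizer (taylorAlgHom a) (AlgHom.id R R[X]) := by
      rw [Algebra.adjoin_le_iff, Set.singleton_subset_iff]
      exact taylor_shiftInvariant p a
    exact hle hf

end ShiftInvariant

end Polynomial

theorem finSuccEquiv_X_one {R : Type*} [CommSemiring R] :
    finSuccEquiv R 1 (X 1) = Polynomial.C (X 0) :=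
  finSuccEquiv_X_succ (j := 0)

open Polynomial in
theorem finSuccEquiv_sigmaYZ (f : MvPolynomial (Fin 2) (ZMod 3)) :
    finSuccEquiv (ZMod 3) 1 (sigmaYZ f) = taylor (X 0) (finSuccEquiv (ZMod 3) 1 f) := by
  have h : (finSuccEquiv (ZMod 3) 1).toAlgHom.comp sigmaYZ =
      ((taylorAlgHom (X 0)).restrictScalars (ZMod 3)).comp (finSuccEquiv (ZMod 3) 1).toAlgHom := by
    refine algHom_ext fun i => ?_
    fin_cases i <;> simp [sigmaYZ, finSuccEquiv_X_zero, finSuccEquiv_X_one]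
  exact DFunLike.congr_fun h f

theorem finSuccEquiv_cubic :
    finSuccEquiv (ZMod 3) 1 (X 0 ^ 3 - X 0 * X 1 ^ 2) = Polynomial.shiftInvariant 3 (X 0) := by
  simp only [map_sub, map_mul, map_pow, finSuccEquiv_X_zero, finSuccEquiv_X_one,
    Polynomial.shiftInvariant]
  ring

theorem map_finSuccEquiv_adjoin :
    (Algebra.adjoin (ZMod 3) {X 1, X 0 ^ 3 - X 0 * X 1 ^ 2}).map
        (finSuccEquiv (ZMod 3) 1).toAlgHom =
      (Algebra.adjoin (MvPolynomial (Fin 1) (ZMod 3))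
        {Polynomial.shiftInvariant 3 (X 0)}).restrictScalars (ZMod 3) := by
  have htop : Algebra.adjoin (ZMod 3) {(X 0 : MvPolynomial (Fin 1) (ZMod 3))} = ⊤ := by
    simpa only [Set.range_unique, Fin.default_eq_zero] using
      adjoin_range_X (σ := Fin 1) (R := ZMod 3)
  rw [AlgHom.map_adjoin, Algebra.adjoin_eq_adjoin_union (ZMod 3) _ _ htop]
  simp [Set.image_insert_eq, finSuccEquiv_X_one, finSuccEquiv_cubic, Set.pair_comm]

theorem algebraicIndependent_X_one_cubic :
    AlgebraicIndependent (ZMod 3)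
      ![(X 1 : MvPolynomial (Fin 2) (ZMod 3)), X 0 ^ 3 - X 0 * X 1 ^ 2] := by
  set e := finSuccEquiv (ZMod 3) 1
  have htrans : Transcendental (MvPolynomial (Fin 1) (ZMod 3))
      (Polynomial.shiftInvariant 3 (X 0 : MvPolynomial (Fin 1) (ZMod 3))) := by
    refine Polynomial.transcendental _ ?_ ?_
    · rw [Polynomial.natDegree_shiftInvariant (p := 3) _ (by norm_num)]; norm_num
    · rw [(Polynomial.monic_shiftInvariant (p := 3) _ (by norm_num)).leadingCoeff]
      exact one_mem _
  have hindep := ((algebraicIndependent_X (Fin 1) (ZMod 3)).sumElim_comp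
    (algebraicIndependent_unique_type_iff (ι := Unit)
      (x := fun _ => Polynomial.shiftInvariant 3 (X 0)) |>.2 htrans)).map'
    (f := e.symm.toAlgHom) e.symm.injective
  convert hindep.comp ![Sum.inr 0, Sum.inl ()] (by decide) using 1
  funext i
  fin_cases i
  · simp [AlgEquiv.eq_symm_apply, e, finSuccEquiv_X_one]
  · simp [AlgEquiv.eq_symm_apply, e, finSuccEquiv_cubic]

/-- The fixed subring of `F₃[y,z]` under `y ↦ y+z, z ↦ z` is the polynomial subring
`F₃[z, c]` where `c = y³ − y z²`; moreover `z` and `c` are algebraically independent. -/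
theorem stmt2 :
    (∀ p : MvPolynomial (Fin 2) (ZMod 3),
      sigmaYZ p = p ↔ p ∈ Algebra.adjoin (ZMod 3)
        ({X 1, X 0 ^ 3 - X 0 * X 1 ^ 2} : Set (MvPolynomial (Fin 2) (ZMod 3)))) ∧
    AlgebraicIndependent (ZMod 3)
      ![(X 1 : MvPolynomial (Fin 2) (ZMod 3)), X 0 ^ 3 - X 0 * X 1 ^ 2] := by
  refine ⟨fun p => ?_, algebraicIndependent_X_one_cubic⟩
  rw [← (finSuccEquiv (ZMod 3) 1).injective.eq_iff, finSuccEquiv_sigmaYZ,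
    Polynomial.taylor_eq_self_iff_mem_adjoin_shiftInvariant 3 (X_ne_zero 0),
    ← Subalgebra.mem_restrictScalars (ZMod 3), ← map_finSuccEquiv_adjoin]
  exact SetLike.ext_iff.mp (Subalgebra.comap_map_eq_self_of_injective
    (f := (finSuccEquiv (ZMod 3) 1).toAlgHom) (finSuccEquiv (ZMod 3) 1).injective _) p
end

section
/- In F_3[y,z] with the automorphism σ: y ↦ y+z, z ↦ z, the space of σ-invariant homogeneous polynomials of degree n has dimension at most 1 + ⌊n/3⌋. More precisely, if p = p_0 z^n + p_1 y z^{n−1} + ... + p_n y^n is σ-invariant and i is the largest index with p_i ≠ 0, then 3 divides i. -/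
open MvPolynomial

/-!
Setting `z = 1` sends a σ-invariant form `p` of degree `n` to `f(y) = p(y, 1)`, which determines `p`,
has degree at most `n` and satisfies `f(y + 1) = f(y)`. If `d = deg f`, the coefficient of `y^(d-1)`
in `f(y + 1)` is `f_(d-1) + d · lc(f)`, so `d · lc(f) = 0` and `3 ∣ d`. Hence an invariant form
vanishes as soon as its coefficients at `y^(3j) z^(n-3j)` do, which bounds the dimension.
-/

open Polynomial in
theorem Polynomial.taylor_coeff_natDegree_sub_one {R : Type*} [CommSemiring R] (f : R[X]) (r : R) :
    (taylor r f).coeff (f.natDegree - 1) =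
      f.coeff (f.natDegree - 1) + f.natDegree * f.leadingCoeff * r := by
  rcases Nat.eq_zero_or_pos f.natDegree with hd | hd
  · obtain ⟨c, rfl⟩ := natDegree_eq_zero.mp hd
    simp
  obtain ⟨d, hd⟩ := Nat.exists_eq_add_one.mpr hd
  have hdeg : (hasseDeriv d f).natDegree < 2 :=
    (natDegree_hasseDeriv_le f d).trans_lt (by omega)
  rw [leadingCoeff, hd, Nat.add_sub_cancel, taylor_coeff, eval_eq_sum_range' hdeg,
    Finset.sum_range_succ, Finset.sum_range_one, hasseDeriv_coeff, hasseDeriv_coeff, zero_add,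
    add_comm 1 d, Nat.choose_self, Nat.choose_succ_self_right]
  simp

open Polynomial in
theorem Polynomial.dvd_natDegree_of_taylor_eq_self {R : Type*} [CommRing R] [NoZeroDivisors R]
    (p : ℕ) [CharP R p] {f : R[X]} {r : R} (hr : r ≠ 0) (h : taylor r f = f) :
    p ∣ f.natDegree := by
  rw [← CharP.cast_eq_zero_iff R p]
  by_cases hf : f = 0
  · simp [hf]
  have hcoeff := f.taylor_coeff_natDegree_sub_one r
  rw [h, left_eq_add] at hcoeff
  simpa [hf, hr] using hcoeff

section Dehomogenization

variable (R : Type*) [CommSemiring R]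

noncomputable def dehomYZ : MvPolynomial (Fin 2) R →ₐ[R] Polynomial R :=
  aeval ![Polynomial.X, 1]

theorem dehomYZ_sigmaYZ (p : MvPolynomial (Fin 2) (ZMod 3)) :
    dehomYZ (ZMod 3) (sigmaYZ p) = Polynomial.taylor 1 (dehomYZ (ZMod 3) p) := by
  have hcomp : (dehomYZ (ZMod 3)).comp sigmaYZ =
      (Polynomial.aeval (Polynomial.X + Polynomial.C 1)).comp (dehomYZ (ZMod 3)) := by
    ext i
    fin_cases i <;> simp [dehomYZ, sigmaYZ]
  rw [Polynomial.taylor_apply, Polynomial.comp_eq_aeval]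
  exact AlgHom.congr_fun hcomp p

variable {R}

theorem dehomYZ_sum (n : ℕ) (a : ℕ → R) :
    dehomYZ R (∑ k ∈ Finset.range (n + 1), C (a k) * X 0 ^ k * X 1 ^ (n - k)) =
      ∑ k ∈ Finset.range (n + 1), Polynomial.C (a k) * Polynomial.X ^ k := by
  simp [dehomYZ]

theorem Polynomial.coeff_sum_range_C_mul_X_pow (n : ℕ) (a : ℕ → R) (k : ℕ) :
    (∑ i ∈ Finset.range (n + 1), Polynomial.C (a i) * Polynomial.X ^ i).coeff k =
      if k ≤ n then a k else 0 := by
  simp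

theorem MvPolynomial.IsHomogeneous.eq_sum_range {p : MvPolynomial (Fin 2) R} {n : ℕ}
    (hp : p.IsHomogeneous n) :
    p = ∑ k ∈ Finset.range (n + 1),
      C (coeff (Finsupp.single 0 k + Finsupp.single 1 (n - k)) p) * X 0 ^ k * X 1 ^ (n - k) := by
  set m : ℕ → Fin 2 →₀ ℕ := fun k => Finsupp.single 0 k + Finsupp.single 1 (n - k)
  have hmonomial (k : ℕ) (c : R) : C c * X 0 ^ k * X 1 ^ (n - k) = monomial (m k) c := by
    rw [X_pow_eq_monomial, X_pow_eq_monomial, C_mul_monomial, monomial_mul, mul_one, mul_one]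
  have hinj : Set.InjOn m (Finset.range (n + 1)) := fun k _ l _ hkl => by
    simpa [m] using congrArg (· 0) hkl
  have hsupp : p.support ⊆ (Finset.range (n + 1)).image m := by
    intro d hd
    have hdeg : d 0 + d 1 = n := by
      simpa [Finsupp.weight_apply, Finsupp.sum_fintype, Fin.sum_univ_two] using
        hp (mem_support_iff.mp hd)
    refine Finset.mem_image.mpr ⟨d 0, Finset.mem_range.mpr (by omega), ?_⟩
    ext i
    fin_cases i
    · simp [m]
    · simp [m]; omega
  calc p = ∑ d ∈ p.support, monomial d (coeff d p) := (support_sum_monomial_coeff p).symm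
    _ = ∑ d ∈ (Finset.range (n + 1)).image m, monomial d (coeff d p) :=
        Finset.sum_subset hsupp fun d _ hd => by rw [notMem_support_iff.mp hd, monomial_zero]
    _ = ∑ k ∈ Finset.range (n + 1), monomial (m k) (coeff (m k) p) := Finset.sum_image hinj
    _ = _ := Finset.sum_congr rfl fun k _ => (hmonomial k _).symm

theorem MvPolynomial.IsHomogeneous.natDegree_dehomYZ_le {p : MvPolynomial (Fin 2) R} {n : ℕ}
    (hp : p.IsHomogeneous n) : (dehomYZ R p).natDegree ≤ n := by
  rw [hp.eq_sum_range, dehomYZ_sum, Polynomial.natDegree_le_iff_coeff_eq_zero]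
  intro k hk
  rw [Polynomial.coeff_sum_range_C_mul_X_pow, if_neg (by omega)]

theorem MvPolynomial.IsHomogeneous.eq_zero_of_dehomYZ_eq_zero {p : MvPolynomial (Fin 2) R}
    {n : ℕ} (hp : p.IsHomogeneous n) (h : dehomYZ R p = 0) : p = 0 := by
  rw [hp.eq_sum_range] at h ⊢
  refine Finset.sum_eq_zero fun k hk => ?_
  have hk : k ≤ n := Nat.lt_succ_iff.mp (Finset.mem_range.mp hk)
  have hcoeff := congrArg (Polynomial.coeff · k) h
  simp only [dehomYZ_sum, Polynomial.coeff_sum_range_C_mul_X_pow, if_pos hk,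
    Polynomial.coeff_zero] at hcoeff
  rw [hcoeff, C_0, zero_mul, zero_mul]

end Dehomogenization

theorem three_dvd_of_sigmaYZ_sum_eq (n : ℕ) (a : ℕ → ZMod 3) (i : ℕ) (hi : i ≤ n)
    (h : sigmaYZ (∑ k ∈ Finset.range (n + 1), C (a k) * X 0 ^ k * X 1 ^ (n - k)) =
      ∑ k ∈ Finset.range (n + 1), C (a k) * X 0 ^ k * X 1 ^ (n - k))
    (hai : a i ≠ 0) (htop : ∀ j, i < j → j ≤ n → a j = 0) : 3 ∣ i := by
  have hf := congrArg (dehomYZ (ZMod 3)) h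
  rw [dehomYZ_sigmaYZ, dehomYZ_sum] at hf
  set f := ∑ k ∈ Finset.range (n + 1), Polynomial.C (a k) * Polynomial.X ^ k
  have hdeg : f.natDegree = i := by
    refine Polynomial.natDegree_eq_of_le_of_coeff_ne_zero ?_ ?_
    · refine Polynomial.natDegree_le_iff_coeff_eq_zero.mpr fun j hj => ?_
      rw [Polynomial.coeff_sum_range_C_mul_X_pow]
      split_ifs with hjn
      exacts [htop j hj hjn, rfl]
    · rwa [Polynomial.coeff_sum_range_C_mul_X_pow, if_pos hi]
  exact hdeg ▸ Polynomial.dvd_natDegree_of_taylor_eq_self 3 one_ne_zero hf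

theorem finrank_sigmaYZ_invariants_homogeneous_le (n : ℕ) :
    Module.finrank (ZMod 3)
      ↥(LinearMap.eqLocus sigmaYZ.toLinearMap LinearMap.id ⊓
          homogeneousSubmodule (Fin 2) (ZMod 3) n) ≤ 1 + n / 3 := by
  set S := LinearMap.eqLocus sigmaYZ.toLinearMap LinearMap.id ⊓
    homogeneousSubmodule (Fin 2) (ZMod 3) n
  let L : S →ₗ[ZMod 3] Fin (n / 3 + 1) → ZMod 3 := LinearMap.pi fun j =>
    (Polynomial.lcoeff (ZMod 3) (3 * j)).comp ((dehomYZ (ZMod 3)).toLinearMap.comp S.subtype)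
  have hL : Function.Injective L := by
    rw [← LinearMap.ker_eq_bot, LinearMap.ker_eq_bot']
    rintro ⟨p, hp⟩ hLp
    obtain ⟨hpinv, hphom⟩ := Submodule.mem_inf.mp hp
    rw [mem_homogeneousSubmodule] at hphom
    have hinv : sigmaYZ p = p := LinearMap.mem_eqLocus.mp hpinv
    set f := dehomYZ (ZMod 3) p
    have hf : Polynomial.taylor 1 f = f := by rw [← dehomYZ_sigmaYZ, hinv]
    obtain ⟨j, hj⟩ := Polynomial.dvd_natDegree_of_taylor_eq_self 3 one_ne_zero hf
    have hlead : f.leadingCoeff = 0 := by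
      have hle : f.natDegree ≤ n := hphom.natDegree_dehomYZ_le
      simpa [L, Polynomial.leadingCoeff, hj] using congrFun hLp ⟨j, by omega⟩
    exact Subtype.ext (hphom.eq_zero_of_dehomYZ_eq_zero (Polynomial.leadingCoeff_eq_zero.mp hlead))
  calc Module.finrank (ZMod 3) S ≤ Module.finrank (ZMod 3) (Fin (n / 3 + 1) → ZMod 3) :=
        LinearMap.finrank_le_finrank_of_injective hL
    _ = 1 + n / 3 := by rw [Module.finrank_fin_fun, add_comm]

/-- The space of σ-invariant homogeneous polynomials of degree `n` in `F₃[y,z]` has dimension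
at most `1 + ⌊n/3⌋`; more precisely, if `p = Σᵢ pᵢ yⁱ z^{n−i}` is σ-invariant and `i` is the
largest index with `pᵢ ≠ 0`, then `3 ∣ i`. -/
theorem stmt3 (n : ℕ) :
    (Module.finrank (ZMod 3)
      ↥(LinearMap.eqLocus sigmaYZ.toLinearMap LinearMap.id ⊓
          homogeneousSubmodule (Fin 2) (ZMod 3) n) ≤ 1 + n / 3) ∧
    (∀ (a : ℕ → ZMod 3) (i : ℕ), i ≤ n →
      sigmaYZ (∑ k ∈ Finset.range (n + 1), C (a k) * X 0 ^ k * X 1 ^ (n - k)) =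
        (∑ k ∈ Finset.range (n + 1), C (a k) * X 0 ^ k * X 1 ^ (n - k)) →
      a i ≠ 0 → (∀ j, i < j → j ≤ n → a j = 0) → 3 ∣ i) :=
  ⟨finrank_sigmaYZ_invariants_homogeneous_le n, three_dvd_of_sigmaYZ_sum_eq n⟩
end

section
/- Consider the F_3-vector space F_3[a] (polynomials in one variable) with the operator D = a^3·(d/da) + ε·a^2 for ε ∈ F_3, i.e., D(a^i) = (i + ε)·a^{i+2}. Then D^3 = 0, and: for ε = 0 the module F_3[a] over F_3[D]/(D^3) decomposes with non-free summands exactly span{a^0} and span{a^1, a^3}; for ε = 1 the unique non-free summand is span{a^0, a^2}; for ε = −1 the unique non-free summand is span{a^1}. -/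
open Polynomial

/-- The operator `D = a³·(d/da) + ε·a²` on `F₃[a]`, i.e. `D(aⁱ) = (i + ε)·a^{i+2}`. -/
noncomputable def Dop (ε : ZMod 3) : Polynomial (ZMod 3) →ₗ[ZMod 3] Polynomial (ZMod 3) :=
  (LinearMap.mulLeft (ZMod 3) (X ^ 3)).comp
      (derivative : Polynomial (ZMod 3) →ₗ[ZMod 3] Polynomial (ZMod 3)) +
    ε • LinearMap.mulLeft (ZMod 3) (X ^ 2)

/-- `W` is a `D`-invariant submodule which is a free `F₃[D]/(D³)`-module
(for `D³ = 0`, freeness is the exactness condition `ker D ∩ W ⊆ D²(W)`). -/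
def IsFreeInvariant (D : Polynomial (ZMod 3) →ₗ[ZMod 3] Polynomial (ZMod 3))
    (W : Submodule (ZMod 3) (Polynomial (ZMod 3))) : Prop :=
  (∀ w ∈ W, D w ∈ W) ∧ ∀ w ∈ W, D w = 0 → ∃ u ∈ W, D (D u) = w

/-!
In the monomial basis `D` is a weighted shift, `aⁱ ↦ (i + ε) a^{i+2}`, so `D³ aⁱ` carries the
weight `(i + ε)(i + ε + 2)(i + ε + 4)`, a product over all of `F₃`, hence zero. All summands are
spans of monomials, the free one spanned by the monomials missing from the others. The span of
the `aⁿ`, `n ∈ s`, is `D`-invariant when `s` is closed under `n ↦ n + 2` except where the weight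
`n + ε` vanishes, and the kernel of `D` on it is spanned by the `aⁿ` with `n ≡ -ε`. For those `n`,
`D²(a^{n-4}) = (-1)(1)·aⁿ = -aⁿ`, so the span is free as soon as each such `n` has `n - 4 ∈ s`.
-/

open Submodule

section MonomialSpan

variable {R : Type*} [Semiring R]

noncomputable def monomialSpan (s : Set ℕ) : Submodule R R[X] :=
  span R ((X ^ ·) '' s)

lemma monomialSpan_eq_span_basisMonomials (s : Set ℕ) :
    (monomialSpan s : Submodule R R[X]) = span R (basisMonomials R '' s) := by
  simp [monomialSpan, X_pow_eq_monomial]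

lemma mem_monomialSpan {s : Set ℕ} {p : R[X]} : p ∈ monomialSpan s ↔ ↑p.support ⊆ s := by
  rw [monomialSpan_eq_span_basisMonomials, Module.Basis.mem_span_image]
  rfl

lemma X_pow_mem_monomialSpan {s : Set ℕ} {n : ℕ} (hn : n ∈ s) :
    (X ^ n : R[X]) ∈ monomialSpan s :=
  subset_span ⟨n, hn, rfl⟩

lemma monomialSpan_union (s t : Set ℕ) :
    (monomialSpan (s ∪ t) : Submodule R R[X]) = monomialSpan s ⊔ monomialSpan t := by
  rw [monomialSpan, Set.image_union, span_union]; rfl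

lemma disjoint_monomialSpan {s t : Set ℕ} (h : Disjoint s t) :
    Disjoint (monomialSpan s : Submodule R R[X]) (monomialSpan t) := by
  refine disjoint_def.mpr fun p hs ht => ?_
  rw [mem_monomialSpan] at hs ht
  rw [← support_eq_empty, ← Finset.coe_eq_empty, ← Set.subset_empty_iff, ← h.inter_eq]
  exact Set.subset_inter hs ht

lemma codisjoint_monomialSpan_compl (s : Set ℕ) :
    Codisjoint (monomialSpan s : Submodule R R[X]) (monomialSpan sᶜ) := by
  rw [codisjoint_iff, ← monomialSpan_union, Set.union_compl_self,
    monomialSpan_eq_span_basisMonomials, Set.image_univ, Module.Basis.span_eq]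

end MonomialSpan

lemma Dop_apply (ε : ZMod 3) (p : (ZMod 3)[X]) :
    Dop ε p = X ^ 2 * (X * derivative p + C ε * p) := by
  simp only [Dop, LinearMap.add_apply, LinearMap.comp_apply, LinearMap.mulLeft_apply,
    LinearMap.smul_apply, smul_eq_C_mul]
  ring

lemma Dop_X_pow (ε : ZMod 3) (n : ℕ) :
    Dop ε (X ^ n) = ((n : ZMod 3) + ε) • X ^ (n + 2) := by
  rw [Dop_apply, derivative_X_pow, smul_eq_C_mul]
  rcases n with _ | n
  · simp
  · simp; ring

lemma coeff_Dop_add_two (ε : ZMod 3) (p : (ZMod 3)[X]) (n : ℕ) :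
    (Dop ε p).coeff (n + 2) = ((n : ZMod 3) + ε) * p.coeff n := by
  rw [Dop_apply, coeff_X_pow_mul, coeff_add, coeff_C_mul]
  rcases n with _ | n
  · simp
  · rw [coeff_X_mul, coeff_derivative]; push_cast; ring

lemma Dop_cube (ε : ZMod 3) (p : (ZMod 3)[X]) : Dop ε (Dop ε (Dop ε p)) = 0 := by
  suffices Dop ε ∘ₗ Dop ε ∘ₗ Dop ε = 0 from LinearMap.congr_fun this p
  refine (basisMonomials (ZMod 3)).ext fun n => ?_
  have hvanish : ∀ x : ZMod 3, x * (x + 2) * (x + 4) = 0 := by decide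
  simp only [coe_basisMonomials, LinearMap.comp_apply, ← X_pow_eq_monomial, Dop_X_pow, map_smul,
    smul_smul, LinearMap.zero_apply]
  push_cast
  refine smul_eq_zero_of_left ?_ _
  linear_combination hvanish (n + ε)

lemma natCast_add_eq_zero_iff (n : ℕ) (ε : ZMod 3) : (n : ZMod 3) + ε = 0 ↔ n % 3 = (-ε).val := by
  rw [add_eq_zero_iff_eq_neg, ← ZMod.val_natCast, (ZMod.val_injective 3).eq_iff]

lemma natCast_add_eq_zero_of_Dop_eq_zero {ε : ZMod 3} {w : (ZMod 3)[X]} (hw : Dop ε w = 0) {n : ℕ}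
    (hn : n ∈ w.support) : (n : ZMod 3) + ε = 0 := by
  have := coeff_Dop_add_two ε w n
  rw [hw, coeff_zero, eq_comm, mul_eq_zero] at this
  exact this.resolve_right (mem_support_iff.mp hn)

lemma Dop_mem_monomialSpan {ε : ZMod 3} {s : Set ℕ}
    (hs : ∀ n ∈ s, (n : ZMod 3) + ε ≠ 0 → n + 2 ∈ s) {p : (ZMod 3)[X]}
    (hp : p ∈ monomialSpan s) : Dop ε p ∈ monomialSpan s := by
  refine (span_le (p := (monomialSpan s).comap (Dop ε))).mpr ?_ hp
  rintro _ ⟨n, hn, rfl⟩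
  rw [SetLike.mem_coe, mem_comap, Dop_X_pow]
  by_cases h : (n : ZMod 3) + ε = 0
  · rw [h, zero_smul]
    exact zero_mem _
  · exact smul_mem _ _ (X_pow_mem_monomialSpan (hs n hn h))

lemma Dop_Dop_X_pow_sub_four {ε : ZMod 3} {n : ℕ} (hn : 4 ≤ n) (hker : (n : ZMod 3) + ε = 0) :
    Dop ε (Dop ε (X ^ (n - 4))) = -X ^ n := by
  obtain ⟨m, rfl⟩ := Nat.exists_eq_add_of_le' hn
  have hprod : ∀ x : ZMod 3, x + 4 = 0 → x * (x + 2) = -1 := by decide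
  have hm := hprod (m + ε) (by push_cast at hker; linear_combination hker)
  simp only [Nat.add_sub_cancel, Dop_X_pow, map_smul, smul_smul]
  push_cast
  rw [show ((m : ZMod 3) + ε) * (m + 2 + ε) = -1 by linear_combination hm, neg_one_smul]

lemma exists_Dop_Dop_eq_of_Dop_eq_zero {ε : ZMod 3} {s : Set ℕ}
    (hs : ∀ n ∈ s, (n : ZMod 3) + ε = 0 → 4 ≤ n ∧ n - 4 ∈ s) {w : (ZMod 3)[X]}
    (hw : w ∈ monomialSpan s) (hker : Dop ε w = 0) :
    ∃ u ∈ monomialSpan s, Dop ε (Dop ε u) = w := by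
  rw [mem_monomialSpan] at hw
  have hs' : ∀ n ∈ w.support, 4 ≤ n ∧ n - 4 ∈ s := fun n hn =>
    hs n (hw hn) (natCast_add_eq_zero_of_Dop_eq_zero hker hn)
  refine ⟨-∑ n ∈ w.support, w.coeff n • X ^ (n - 4),
    neg_mem (sum_mem fun n hn => smul_mem _ _ (X_pow_mem_monomialSpan (hs' n hn).2)), ?_⟩
  conv_rhs => rw [w.as_sum_support_C_mul_X_pow]
  simp only [map_neg, map_sum, map_smul, ← Finset.sum_neg_distrib]
  refine Finset.sum_congr rfl fun n hn => ?_
  rw [Dop_Dop_X_pow_sub_four (hs' n hn).1 (natCast_add_eq_zero_of_Dop_eq_zero hker hn), smul_neg,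
    neg_neg, smul_eq_C_mul]

lemma isFreeInvariant_Dop_monomialSpan {ε : ZMod 3} {s : Set ℕ}
    (hinv : ∀ n ∈ s, (n : ZMod 3) + ε ≠ 0 → n + 2 ∈ s)
    (hfree : ∀ n ∈ s, (n : ZMod 3) + ε = 0 → 4 ≤ n ∧ n - 4 ∈ s) :
    IsFreeInvariant (Dop ε) (monomialSpan s) :=
  ⟨fun _ => Dop_mem_monomialSpan hinv, fun _ => exists_Dop_Dop_eq_of_Dop_eq_zero hfree⟩

/-- `D = a³ d/da + ε a²` satisfies `D³ = 0`, and the decomposition of `F₃[a]` into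
indecomposable `F₃[D]/(D³)`-modules has non-free summands exactly:
`span{1}` and `span{a, a³}` for `ε = 0`; `span{1, a²}` for `ε = 1`; `span{a}` for `ε = −1`. -/
theorem stmt5 :
    (∀ ε : ZMod 3, ∀ p, Dop ε (Dop ε (Dop ε p)) = 0) ∧
    (∃ W, IsFreeInvariant (Dop 0) W ∧
      (∀ w ∈ Submodule.span (ZMod 3) ({1} : Set (Polynomial (ZMod 3))), Dop 0 w ∈
        Submodule.span (ZMod 3) ({1} : Set (Polynomial (ZMod 3)))) ∧
      (∀ w ∈ Submodule.span (ZMod 3) ({X, X ^ 3} : Set (Polynomial (ZMod 3))), Dop 0 w ∈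
        Submodule.span (ZMod 3) ({X, X ^ 3} : Set (Polynomial (ZMod 3)))) ∧
      Submodule.span (ZMod 3) ({1} : Set (Polynomial (ZMod 3))) ⊓
        Submodule.span (ZMod 3) ({X, X ^ 3} : Set (Polynomial (ZMod 3))) = ⊥ ∧
      W ⊓ (Submodule.span (ZMod 3) ({1} : Set (Polynomial (ZMod 3))) ⊔
        Submodule.span (ZMod 3) ({X, X ^ 3} : Set (Polynomial (ZMod 3)))) = ⊥ ∧
      W ⊔ (Submodule.span (ZMod 3) ({1} : Set (Polynomial (ZMod 3))) ⊔
        Submodule.span (ZMod 3) ({X, X ^ 3} : Set (Polynomial (ZMod 3)))) = ⊤) ∧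
    (∃ W, IsFreeInvariant (Dop 1) W ∧
      (∀ w ∈ Submodule.span (ZMod 3) ({1, X ^ 2} : Set (Polynomial (ZMod 3))), Dop 1 w ∈
        Submodule.span (ZMod 3) ({1, X ^ 2} : Set (Polynomial (ZMod 3)))) ∧
      W ⊓ Submodule.span (ZMod 3) ({1, X ^ 2} : Set (Polynomial (ZMod 3))) = ⊥ ∧
      W ⊔ Submodule.span (ZMod 3) ({1, X ^ 2} : Set (Polynomial (ZMod 3))) = ⊤) ∧
    (∃ W, IsFreeInvariant (Dop (-1)) W ∧
      (∀ w ∈ Submodule.span (ZMod 3) ({X} : Set (Polynomial (ZMod 3))), Dop (-1) w ∈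
        Submodule.span (ZMod 3) ({X} : Set (Polynomial (ZMod 3)))) ∧
      W ⊓ Submodule.span (ZMod 3) ({X} : Set (Polynomial (ZMod 3))) = ⊥ ∧
      W ⊔ Submodule.span (ZMod 3) ({X} : Set (Polynomial (ZMod 3))) = ⊤) := by
  have h0 : span (ZMod 3) {1} = monomialSpan {0} := by simp [monomialSpan]
  have h1 : span (ZMod 3) {X} = monomialSpan {1} := by simp [monomialSpan]
  have h02 : span (ZMod 3) {1, X ^ 2} = monomialSpan {0, 2} := by
    simp [monomialSpan, Set.image_insert_eq]
  have h13 : span (ZMod 3) {X, X ^ 3} = monomialSpan {1, 3} := by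
    simp [monomialSpan, Set.image_insert_eq]
  have h013 : (monomialSpan {0} ⊔ monomialSpan {1, 3} : Submodule (ZMod 3) (ZMod 3)[X]) =
      monomialSpan {0, 1, 3} := by
    rw [← monomialSpan_union, Set.singleton_union]
  rw [h0, h1, h02, h13, h013]
  have hval : (-0 : ZMod 3).val = 0 ∧ (-1 : ZMod 3).val = 2 ∧ (-(-1) : ZMod 3).val = 1 :=
    ⟨rfl, rfl, rfl⟩
  refine ⟨Dop_cube, ⟨monomialSpan {0, 1, 3}ᶜ, isFreeInvariant_Dop_monomialSpan ?_ ?_,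
      fun _ => Dop_mem_monomialSpan ?_, fun _ => Dop_mem_monomialSpan ?_,
      (disjoint_monomialSpan (by simp)).eq_bot, (disjoint_monomialSpan disjoint_compl_left).eq_bot,
      (codisjoint_monomialSpan_compl _).symm.eq_top⟩,
    ⟨monomialSpan {0, 2}ᶜ, isFreeInvariant_Dop_monomialSpan ?_ ?_,
      fun _ => Dop_mem_monomialSpan ?_, (disjoint_monomialSpan disjoint_compl_left).eq_bot,
      (codisjoint_monomialSpan_compl _).symm.eq_top⟩,
    ⟨monomialSpan {1}ᶜ, isFreeInvariant_Dop_monomialSpan ?_ ?_,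
      fun _ => Dop_mem_monomialSpan ?_, (disjoint_monomialSpan disjoint_compl_left).eq_bot,
      (codisjoint_monomialSpan_compl _).symm.eq_top⟩⟩
  all_goals
    intro n hn h
    simp only [Ne, natCast_add_eq_zero_iff, hval] at h
    simp only [Set.mem_compl_iff, Set.mem_insert_iff, Set.mem_singleton_iff] at hn ⊢
    omega
end
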